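/- (Matrix inversion lemma for separable regularized least squares.) Let μ > 0 and let C satisfy ΓᵀΓ C ΨᵀΨ + μC = Q. Then C = Q/μ − Γᵀ U_Γ (Δ_μ ∘ (U_Γᵀ Γ Q Ψᵀ U_Ψ)) U_Ψᵀ Ψ / μ, where U_Γ, U_Ψ are orthogonal matrices of eigenvectors of ΓΓᵀ and ΨΨᵀ with eigenvalues δ_{Γ,i}, δ_{Ψ,j}, [Δ_μ]_{i,j} = 1/(δ_{Γ,i}δ_{Ψ,j} + μ), and ∘ denotes entrywise multiplication. -/

import Mathlib

open Matrix

/-- Matrix inversion lemma for the separable regularized least squares update: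
if `ΓᵀΓ C ΨᵀΨ + μC = Q` then
`C = Q/μ − Γᵀ U_Γ (Δ_μ ∘ (U_Γᵀ Γ Q Ψᵀ U_Ψ)) U_Ψᵀ Ψ / μ`, where
`[Δ_μ]_{ij} = 1/(δ_{Γ,i}δ_{Ψ,j} + μ)` and `∘` is entrywise multiplication. -/
theorem separable_matrix_inversion_lemma {G NΓ V NΨ : ℕ}
    (hG : G ≤ NΓ) (hV : V ≤ NΨ)
    (Γ : Matrix (Fin G) (Fin NΓ) ℝ) (Ψ : Matrix (Fin V) (Fin NΨ) ℝ)
    (UΓ : Matrix (Fin G) (Fin G) ℝ) (UΨ : Matrix (Fin V) (Fin V) ℝ)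
    (dΓ : Fin G → ℝ) (dΨ : Fin V → ℝ)
    (hUΓ1 : UΓᵀ * UΓ = 1) (hUΓ2 : UΓ * UΓᵀ = 1)
    (hUΨ1 : UΨᵀ * UΨ = 1) (hUΨ2 : UΨ * UΨᵀ = 1)
    (hdΓ : ∀ i, 0 ≤ dΓ i) (hdΨ : ∀ j, 0 ≤ dΨ j)
    (hΓ : Γ * Γᵀ = UΓ * Matrix.diagonal dΓ * UΓᵀ)
    (hΨ : Ψ * Ψᵀ = UΨ * Matrix.diagonal dΨ * UΨᵀ)
    (μ : ℝ) (hμ : 0 < μ)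
    (Q C : Matrix (Fin NΓ) (Fin NΨ) ℝ)
    (hC : Γᵀ * Γ * C * (Ψᵀ * Ψ) + μ • C = Q) :
    C = μ⁻¹ • Q -
        μ⁻¹ • (Γᵀ * UΓ *
          (Matrix.of fun i j =>
            (1 / (dΓ i * dΨ j + μ)) * (UΓᵀ * Γ * Q * Ψᵀ * UΨ) i j) *
          UΨᵀ * Ψ) := by
  set M : Matrix (Fin G) (Fin V) ℝ := UΓᵀ * Γ * C * Ψᵀ * UΨ with hM
  have hN : UΓᵀ * Γ * Q * Ψᵀ * UΨ
      = Matrix.diagonal dΓ * M * Matrix.diagonal dΨ + μ • M := by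
    rw [← hC]
    have h1 : Γ * (Γᵀ * Γ) = UΓ * Matrix.diagonal dΓ * (UΓᵀ * Γ) := by
      rw [← Matrix.mul_assoc, hΓ]; simp only [Matrix.mul_assoc, Matrix.mul_one, Matrix.one_mul]
    have h2 : (Ψᵀ * Ψ) * Ψᵀ = Ψᵀ * UΨ * (Matrix.diagonal dΨ * UΨᵀ) := by
      rw [Matrix.mul_assoc, hΨ]; simp only [Matrix.mul_assoc, Matrix.mul_one, Matrix.one_mul]
    have : UΓᵀ * Γ * (Γᵀ * Γ * C * (Ψᵀ * Ψ) + μ • C) * Ψᵀ * UΨ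
        = UΓᵀ * (Γ * (Γᵀ * Γ)) * C * ((Ψᵀ * Ψ) * Ψᵀ) * UΨ
          + μ • (UΓᵀ * Γ * C * Ψᵀ * UΨ) := by
      simp only [Matrix.mul_add, Matrix.add_mul, Matrix.mul_smul, Matrix.smul_mul]
      simp only [Matrix.mul_assoc, Matrix.mul_one, Matrix.one_mul]
    rw [this, h1, h2, hM]
    congr 1
    calc UΓᵀ * (UΓ * Matrix.diagonal dΓ * (UΓᵀ * Γ)) * C *
          (Ψᵀ * UΨ * (Matrix.diagonal dΨ * UΨᵀ)) * UΨ
        = (UΓᵀ * UΓ) * Matrix.diagonal dΓ * (UΓᵀ * Γ * C * Ψᵀ * UΨ) *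
            Matrix.diagonal dΨ * (UΨᵀ * UΨ) := by simp only [Matrix.mul_assoc, Matrix.mul_one, Matrix.one_mul]
      _ = Matrix.diagonal dΓ * M * Matrix.diagonal dΨ := by
          rw [hUΓ1, hUΨ1, hM]; simp only [Matrix.mul_assoc, Matrix.mul_one, Matrix.one_mul]
  have hHad : (Matrix.of fun i j =>
      (1 / (dΓ i * dΨ j + μ)) * (UΓᵀ * Γ * Q * Ψᵀ * UΨ) i j) = M := by
    ext i j
    have hpos : 0 < dΓ i * dΨ j + μ :=
      add_pos_of_nonneg_of_pos (mul_nonneg (hdΓ i) (hdΨ j)) hμ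
    simp only [Matrix.of_apply, hN, Matrix.add_apply, Matrix.smul_apply,
      Matrix.mul_diagonal, Matrix.diagonal_mul, smul_eq_mul]
    field_simp
  rw [hHad]
  have hMid : Γᵀ * UΓ * M * UΨᵀ * Ψ = Γᵀ * Γ * C * (Ψᵀ * Ψ) := by
    rw [hM]
    calc Γᵀ * UΓ * (UΓᵀ * Γ * C * Ψᵀ * UΨ) * UΨᵀ * Ψ
        = Γᵀ * (UΓ * UΓᵀ) * Γ * C * Ψᵀ * (UΨ * UΨᵀ) * Ψ := by simp only [Matrix.mul_assoc, Matrix.mul_one, Matrix.one_mul]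
      _ = Γᵀ * Γ * C * (Ψᵀ * Ψ) := by rw [hUΓ2, hUΨ2]; simp only [Matrix.mul_assoc, Matrix.mul_one, Matrix.one_mul]
  rw [hMid, ← hC]
  ext i j
  simp only [Matrix.sub_apply, Matrix.smul_apply, Matrix.add_apply, smul_eq_mul]
  field_simp
  ring
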